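/- Let H be the real Heisenberg group (ℝ³ with multiplication (a,b,x)*(c,d,y) = (a+c, b+d, x+y+ad−bc)) and Z = {0}²×ℤ its central discrete subgroup. Then KO(H/Z) equals the central circle ({0}²×ℝ)/Z ≅ ℝ/ℤ. -/

import Mathlib

def KO (G : Type*) [Group G] [TopologicalSpace G] : Subgroup G :=
  ⨅ (n : ℕ) (ρ : G →* GL (Fin n) ℂ) (_ : Continuous ρ), ρ.ker

/-- The real Heisenberg group: `ℝ³` with `(a,b,x)*(c,d,y) = (a+c, b+d, x+y+ad-bc)`. -/
@[ext] structure Heis where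
  a : ℝ
  b : ℝ
  x : ℝ

namespace Heis

instance : Mul Heis :=
  ⟨fun p q => ⟨p.a + q.a, p.b + q.b, p.x + q.x + p.a * q.b - p.b * q.a⟩⟩
instance : One Heis := ⟨⟨0, 0, 0⟩⟩
instance : Inv Heis := ⟨fun p => ⟨-p.a, -p.b, -p.x⟩⟩

@[simp] lemma mul_a (p q : Heis) : (p * q).a = p.a + q.a := rfl
@[simp] lemma mul_b (p q : Heis) : (p * q).b = p.b + q.b := rfl
@[simp] lemma mul_x (p q : Heis) : (p * q).x = p.x + q.x + p.a * q.b - p.b * q.a := rfl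
@[simp] lemma one_a : (1 : Heis).a = 0 := rfl
@[simp] lemma one_b : (1 : Heis).b = 0 := rfl
@[simp] lemma one_x : (1 : Heis).x = 0 := rfl
@[simp] lemma inv_a (p : Heis) : p⁻¹.a = -p.a := rfl
@[simp] lemma inv_b (p : Heis) : p⁻¹.b = -p.b := rfl
@[simp] lemma inv_x (p : Heis) : p⁻¹.x = -p.x := rfl

instance : Group Heis where
  mul_assoc p q r := by ext <;> simp <;> ring
  one_mul p := by ext <;> simp
  mul_one p := by ext <;> simp
  inv_mul_cancel p := by ext <;> simp <;> ring

/-- Topology of `ℝ³`, transported to `Heis`. -/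
instance : TopologicalSpace Heis :=
  TopologicalSpace.induced (fun p : Heis => (p.a, p.b, p.x)) inferInstance

/-- The central subgroup `{0}² × ℤ`. -/
def Z : Subgroup Heis where
  carrier := {p | p.a = 0 ∧ p.b = 0 ∧ ∃ n : ℤ, p.x = n}
  one_mem' := ⟨rfl, rfl, 0, by simp⟩
  mul_mem' := by
    rintro p q ⟨ha, hb, m, hm⟩ ⟨ha', hb', k, hk⟩
    refine ⟨by simp [ha, ha'], by simp [hb, hb'], m + k, ?_⟩
    simp [ha, hb, ha', hb', hm, hk]
  inv_mem' := by
    rintro p ⟨ha, hb, m, hm⟩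
    exact ⟨by simp [ha], by simp [hb], -m, by simp [hm]⟩

instance : Z.Normal := by
  constructor
  rintro p ⟨ha, hb, m, hm⟩ g
  refine ⟨by simp [ha], by simp [hb], m, ?_⟩
  simp only [mul_x, mul_a, mul_b, inv_a, inv_b, inv_x, ha, hb, hm]
  ring

/-- The center `{0}² × ℝ` of the Heisenberg group. -/
def C : Subgroup Heis where
  carrier := {p | p.a = 0 ∧ p.b = 0}
  one_mem' := ⟨rfl, rfl⟩
  mul_mem' := by rintro p q ⟨ha, hb⟩ ⟨ha', hb'⟩; exact ⟨by simp [ha, ha'], by simp [hb, hb']⟩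
  inv_mem' := by rintro p ⟨ha, hb⟩; exact ⟨by simp [ha], by simp [hb]⟩

end Heis

/-!
Every continuous representation `ρ` of `H/Z` lifts to one of `H` that is trivial on
`(0,0,1)`. For `b ≠ 0` the element `(0,b,u)` is conjugate to `(0,b,0)`, so letting `b → 0`
shows that `ρ(0,0,u)` has the characteristic polynomial of the identity, i.e. is unipotent.
A unipotent matrix of finite order is the identity, so `ρ` kills `(0,0,q)` for rational `q`
(as `(0,0,q)^den q = (0,0,num q) ∈ Z`), hence by continuity the whole centre.
Conversely the characters `exp a` and `exp b` factor through `H/Z` and together detect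
every element outside the centre.
-/

open Polynomial

theorem mem_KO_iff {G : Type*} [Group G] [TopologicalSpace G] {g : G} :
    g ∈ KO G ↔ ∀ (n : ℕ) (ρ : G →* GL (Fin n) ℂ), Continuous ρ → ρ g = 1 := by
  simp [KO, Subgroup.mem_iInf]

noncomputable def expRep : Multiplicative ℝ →* GL (Fin 1) ℂ :=
  MonoidHom.toHomUnits
    { toFun := fun t => Matrix.scalar (Fin 1) (Complex.exp t.toAdd)
      map_one' := by simp
      map_mul' := fun s t => by simp [Complex.exp_add] }

theorem continuous_expRep : Continuous expRep := by
  have hval : Continuous fun t => (expRep t : Matrix (Fin 1) (Fin 1) ℂ) := by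
    simp only [expRep, MonoidHom.coe_toHomUnits, MonoidHom.coe_mk, OneHom.coe_mk,
      Matrix.scalar_apply]
    fun_prop
  refine Units.continuous_iff.mpr ⟨hval, ?_⟩
  simpa only [Function.comp_def, map_inv] using hval.comp continuous_inv

theorem expRep_eq_one {t : Multiplicative ℝ} (h : expRep t = 1) : t = 1 := by
  have := congrArg (fun A : GL (Fin 1) ℂ => (A : Matrix (Fin 1) (Fin 1) ℂ) 0 0) h
  simpa [expRep, ← Complex.ofReal_exp] using this

theorem KO_le_ker {G : Type*} [Group G] [TopologicalSpace G] (f : G →* Multiplicative ℝ)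
    (hf : Continuous f) : KO G ≤ f.ker := fun _ hg =>
  expRep_eq_one (mem_KO_iff.mp hg 1 (expRep.comp f) (continuous_expRep.comp hf))

theorem map_eq_one_of_mk_mem_KO {G : Type*} [Group G] [TopologicalSpace G] {N : Subgroup G}
    [N.Normal] (f : G →* Multiplicative ℝ) (hf : Continuous f) (hN : N ≤ f.ker) {g : G}
    (hg : (g : G ⧸ N) ∈ KO (G ⧸ N)) : f g = 1 :=
  KO_le_ker (QuotientGroup.lift N f hN)
    ((QuotientGroup.isQuotientMap_mk N).continuous_iff.mpr hf) hg

theorem eq_one_of_isNilpotent_sub_one_of_pow_eq_one {A : Type*} [Ring A] {M : A} {k : ℕ}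
    (hk : IsUnit (k : A)) (hM : IsNilpotent (M - 1)) (hMk : M ^ k = 1) : M = 1 := by
  set S := ∑ i ∈ Finset.range k, M ^ i
  set T := ∑ i ∈ Finset.range k, ∑ j ∈ Finset.range i, M ^ j
  have hS : S * (M - 1) = 0 := by rw [geom_sum_mul, hMk, sub_self]
  -- `S - k = ∑ (M ^ i - 1)` and each `M ^ i - 1` is a multiple of `M - 1`.
  have hST : S = k + T * (M - 1) := by
    rw [Finset.sum_mul]
    simp only [S, geom_sum_mul, Finset.sum_sub_distrib, Finset.sum_const, Finset.card_range,
      nsmul_eq_mul, mul_one, add_sub_cancel]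
  have hcomm : Commute T (M - 1) :=
    .sub_right (.sum_left _ _ _ fun i _ => .sum_left _ _ _ fun j _ => .pow_left (.refl M) j)
      (.one_right T)
  have hunit : IsUnit S := hST ▸
    (hcomm.isNilpotent_mul_left hM).isUnit_add_left_of_commute hk (Nat.cast_commute k _).symm
  exact sub_eq_zero.mp (hunit.mul_right_eq_zero.mp hS)

theorem Matrix.isNilpotent_sub_one_of_charpoly_eq {n R : Type*} [Fintype n] [DecidableEq n]
    [CommRing R] {M : Matrix n n R} (h : M.charpoly = (X - 1) ^ Fintype.card n) :
    IsNilpotent (M - 1) :=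
  ⟨Fintype.card n, by simpa [h] using M.aeval_self_charpoly⟩

theorem Matrix.charpoly_eq_of_isConj {n R : Type*} [Fintype n] [DecidableEq n] [CommRing R]
    {A B : GL n R} (h : IsConj A B) :
    (A : Matrix n n R).charpoly = (B : Matrix n n R).charpoly := by
  obtain ⟨C, rfl⟩ := isConj_iff.mp h
  rw [Units.val_mul, Units.val_mul, Matrix.coe_units_inv, Matrix.charpoly_units_conj]

theorem Matrix.charpoly_eq_of_eqOn_dense {n K X : Type*} [Fintype n] [DecidableEq n] [Field K]
    [Infinite K] [TopologicalSpace K] [IsTopologicalRing K] [T2Space K] [TopologicalSpace X]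
    {s : Set X} (hs : Dense s) {f g : X → Matrix n n K} (hf : Continuous f) (hg : Continuous g)
    (h : ∀ x ∈ s, (f x).charpoly = (g x).charpoly) (x : X) :
    (f x).charpoly = (g x).charpoly := by
  refine Polynomial.funext fun t => ?_
  have hcont : ∀ {F : X → Matrix n n K}, Continuous F →
      Continuous fun y => (F y).charpoly.eval t := fun hF => by
    simp only [Matrix.eval_charpoly]
    exact (continuous_const.sub hF).matrix_det
  exact congrFun (Continuous.ext_on hs (hcont hf) (hcont hg) fun y hy => by rw [h y hy]) x

theorem MonoidHom.eq_one_of_map_ofAdd_one {G : Type*} [Group G] [TopologicalSpace G]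
    [T2Space G] (φ : Multiplicative ℝ →* G) (hφ : Continuous φ) (h1 : φ (.ofAdd 1) = 1)
    (htors : ∀ (t : Multiplicative ℝ) (k : ℕ), k ≠ 0 → φ t ^ k = 1 → φ t = 1)
    (t : Multiplicative ℝ) : φ t = 1 := by
  have hint (m : ℤ) : φ (.ofAdd m) = 1 := by
    rw [← mul_one (m : ℝ), ← zsmul_eq_mul, ofAdd_zsmul, map_zpow, h1, one_zpow]
  have hrat (q : ℚ) : φ (.ofAdd q) = 1 := by
    refine htors _ q.den q.den_nz ?_
    rw [← map_pow, ← ofAdd_nsmul, nsmul_eq_mul, ← Rat.cast_natCast, ← Rat.cast_mul,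
      Rat.den_mul_eq_num, Rat.cast_intCast, hint]
  have hext : (fun s : ℝ => φ (.ofAdd s)) = fun _ => 1 :=
    Continuous.ext_on Rat.denseRange_cast (hφ.comp continuous_ofAdd) continuous_const
      (by rintro _ ⟨q, rfl⟩; exact hrat q)
  exact congrFun hext t.toAdd

namespace Heis

theorem continuous_toProd : Continuous fun p : Heis => (p.a, p.b, p.x) := continuous_induced_dom

theorem continuous_a : Continuous Heis.a := continuous_fst.comp continuous_toProd

theorem continuous_b : Continuous Heis.b :=
  continuous_fst.comp (continuous_snd.comp continuous_toProd)

theorem continuous_mk {X : Type*} [TopologicalSpace X] {f g h : X → ℝ} (hf : Continuous f)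
    (hg : Continuous g) (hh : Continuous h) : Continuous fun t => (⟨f t, g t, h t⟩ : Heis) :=
  continuous_induced_rng.mpr (hf.prodMk (hg.prodMk hh))

theorem mk_zero : (⟨0, 0, 0⟩ : Heis) = 1 := rfl

def fst : Heis →* Multiplicative ℝ where
  toFun p := .ofAdd p.a
  map_one' := rfl
  map_mul' _ _ := rfl

def snd : Heis →* Multiplicative ℝ where
  toFun p := .ofAdd p.b
  map_one' := rfl
  map_mul' _ _ := rfl

def centralLine : Multiplicative ℝ →* Heis where
  toFun t := ⟨0, 0, t.toAdd⟩
  map_one' := rfl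
  map_mul' _ _ := by ext <;> simp

theorem Z_le_ker_fst : Z ≤ fst.ker := fun _ hp => congrArg Multiplicative.ofAdd hp.1

theorem Z_le_ker_snd : Z ≤ snd.ker := fun _ hp => congrArg Multiplicative.ofAdd hp.2.1

theorem isConj_mk_of_ne_zero (u : ℝ) {b : ℝ} (hb : b ≠ 0) :
    IsConj (⟨0, b, 0⟩ : Heis) ⟨0, b, u⟩ :=
  isConj_iff.mpr ⟨⟨u / (2 * b), 0, 0⟩, by ext <;> simp; field_simp; ring⟩

section Representation

variable {n K : Type*} [Fintype n] [DecidableEq n] [Field K] [TopologicalSpace K]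
  [IsTopologicalRing K] [T2Space K]

theorem charpoly_map_central [Infinite K] (σ : Heis →* GL n K) (hσ : Continuous σ) (u : ℝ) :
    (σ ⟨0, 0, u⟩ : Matrix n n K).charpoly = (X - 1) ^ Fintype.card n := by
  have hcurve (v : ℝ) : Continuous fun b => (σ ⟨0, b, v⟩ : Matrix n n K) :=
    Units.continuous_val.comp
      (hσ.comp (continuous_mk continuous_const continuous_id continuous_const))
  have key := Matrix.charpoly_eq_of_eqOn_dense (dense_compl_singleton (0 : ℝ)) (hcurve u)
    (hcurve 0) (fun b hb =>
      Matrix.charpoly_eq_of_isConj (σ.map_isConj (isConj_mk_of_ne_zero u hb)).symm) 0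
  simpa [mk_zero, Matrix.charpoly_one] using key

theorem map_central_eq_one [CharZero K] (σ : Heis →* GL n K) (hσ : Continuous σ)
    (h1 : σ ⟨0, 0, 1⟩ = 1) (u : ℝ) : σ ⟨0, 0, u⟩ = 1 := by
  refine (σ.comp centralLine).eq_one_of_map_ofAdd_one (hσ.comp ?_) h1
    (fun t k hk htk => ?_) (.ofAdd u)
  · exact continuous_mk continuous_const continuous_const continuous_toAdd
  · have hunit : IsUnit (k : Matrix n n K) := by
      rw [← map_natCast (algebraMap K (Matrix n n K))]
      exact (isUnit_iff_ne_zero.mpr (Nat.cast_ne_zero.mpr hk)).map _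
    exact Units.ext (eq_one_of_isNilpotent_sub_one_of_pow_eq_one hunit
      (Matrix.isNilpotent_sub_one_of_charpoly_eq (charpoly_map_central σ hσ t.toAdd))
      (by rw [← Units.val_pow_eq_pow_val, htk, Units.val_one]))

end Representation

end Heis

/-- `KO(H/Z)` is exactly the central circle `({0}² × ℝ)/Z ≅ ℝ/ℤ`. -/
theorem KO_Heisenberg_mod_Z :
    KO (Heis ⧸ Heis.Z) = Heis.C.map (QuotientGroup.mk' Heis.Z) := by
  apply le_antisymm
  · intro g hg
    obtain ⟨p, rfl⟩ := QuotientGroup.mk'_surjective Heis.Z g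
    have ha : p.a = 0 := congrArg Multiplicative.toAdd <| map_eq_one_of_mk_mem_KO Heis.fst
      (continuous_ofAdd.comp Heis.continuous_a) Heis.Z_le_ker_fst hg
    have hb : p.b = 0 := congrArg Multiplicative.toAdd <| map_eq_one_of_mk_mem_KO Heis.snd
      (continuous_ofAdd.comp Heis.continuous_b) Heis.Z_le_ker_snd hg
    exact ⟨p, ⟨ha, hb⟩, rfl⟩
  · rintro _ ⟨⟨a, b, x⟩, ⟨rfl, rfl⟩, rfl⟩
    refine mem_KO_iff.mpr fun n ρ hρ => ?_
    have hZ : ((⟨0, 0, 1⟩ : Heis) : Heis ⧸ Heis.Z) = 1 :=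
      (QuotientGroup.eq_one_iff _).mpr ⟨rfl, rfl, 1, by simp⟩
    exact Heis.map_central_eq_one (ρ.comp (QuotientGroup.mk' Heis.Z))
      (hρ.comp QuotientGroup.continuous_mk) (by simp [hZ]) x
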